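/- Fix β > 0, α ≥ 0, and a Bernstein function f with f(α) > 0. Define s₀ = 1 and sₙ = f(α)f(α+β)···f(α+(n−1)β). Then for any 0 < c ≤ 2, the Carleman condition Σₙ sₙ^{−c/(2n)} = ∞ holds. -/

import Mathlib

/-!
On `[0, ∞)` the Lévy–Khintchine representation makes `f` monotone, so every factor
`f (α + k β)` is at least `f α > 0`, and, through `1 - e^{-s x} ≤ 2 (1 + s) x / (1 + x)`, at most
affine. Hence `f (α + k β) ≤ C (k + 1)` and `sₙ ≤ (C n)ⁿ`, so the `n`-th Carleman term is at least
`(C n)^{-c/2}`, whose series diverges for `c ≤ 2`.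
-/

open MeasureTheory Real Finset

lemma rpow_neg_le_rpow_neg_div_of_le_pow {x y p : ℝ} {n : ℕ} (hx : 0 < x) (hy : 0 ≤ y)
    (hxy : x ≤ y ^ n) (hn : n ≠ 0) (hp : 0 ≤ p) : y ^ (-p) ≤ x ^ (-(p / n)) :=
  calc y ^ (-p) = (y ^ n) ^ (-(p / n)) := by
        rw [← Real.rpow_natCast_mul hy]; field_simp
    _ ≤ x ^ (-(p / n)) := Real.rpow_le_rpow_of_nonpos hx hxy (neg_nonpos.2 (by positivity))

lemma prod_range_le_mul_pow_of_le_mul_succ {g : ℕ → ℝ} {C : ℝ} (hg0 : ∀ k, 0 ≤ g k)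
    (hg : ∀ k, g k ≤ C * (k + 1)) (n : ℕ) : ∏ k ∈ range n, g k ≤ (C * n) ^ n := by
  have hC : 0 ≤ C := by simpa using (hg0 0).trans (hg 0)
  calc ∏ k ∈ range n, g k ≤ ∏ _k ∈ range n, C * n := by
        refine prod_le_prod (fun k _ => hg0 k) fun k hk => (hg k).trans ?_
        gcongr
        exact_mod_cast mem_range.1 hk
    _ = (C * n) ^ n := by rw [prod_const, card_range]

theorem not_summable_prod_rpow_of_le_mul_succ {g : ℕ → ℝ} {C c : ℝ} (hg0 : ∀ k, 0 < g k)
    (hg : ∀ k, g k ≤ C * (k + 1)) (hc0 : 0 ≤ c) (hc2 : c ≤ 2) :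
    ¬ Summable (fun n : ℕ => (∏ k ∈ range n, g k) ^ (-(c / (2 * (n : ℝ))))) := by
  intro hsum
  have hC : 0 < C := by simpa using (hg0 0).trans_le (hg 0)
  have hterm : ∀ n : ℕ, C ^ (-(c / 2)) * (n : ℝ) ^ (-(c / 2))
      ≤ (∏ k ∈ range n, g k) ^ (-(c / (2 * (n : ℝ)))) := by
    intro n
    rw [← Real.mul_rpow hC.le n.cast_nonneg]
    rcases eq_or_ne n 0 with rfl | hn
    · simpa using Real.zero_rpow_le_one _
    · have hprod := prod_range_le_mul_pow_of_le_mul_succ (fun k => (hg0 k).le) hg n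
      have := rpow_neg_le_rpow_neg_div_of_le_pow (prod_pos fun k _ => hg0 k) (by positivity)
        hprod hn (by positivity : 0 ≤ c / 2)
      rwa [div_div] at this
  have hharm : Summable (fun n : ℕ => (n : ℝ) ^ (-(c / 2))) :=
    (summable_mul_left_iff (Real.rpow_pos_of_pos hC _).ne').1 <|
      hsum.of_nonneg_of_le (fun n => by positivity) hterm
  linarith [Real.summable_nat_rpow.1 hharm]

lemma one_sub_exp_neg_mul_le {s x : ℝ} (hs : 0 ≤ s) (hx : 0 ≤ x) :
    1 - exp (-s * x) ≤ 2 * (1 + s) * (x / (1 + x)) := by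
  have hexp : -s * x + 1 ≤ exp (-s * x) := add_one_le_exp _
  rw [← mul_div_assoc, le_div_iff₀ (by positivity)]
  rcases le_total x 1 with hx1 | hx1
  · nlinarith [mul_nonneg hs hx, exp_pos (-s * x)]
  · nlinarith [exp_pos (-s * x)]

section LevyMeasure

variable {ν : Measure ℝ}

lemma ae_pos_of_measure_Iic_eq_zero (hsupp : ν (Set.Iic 0) = 0) : ∀ᵐ x ∂ν, 0 < x :=
  ae_iff.2 (measure_mono_null (fun _ hx => not_lt.1 hx) hsupp)

variable (hsupp : ν (Set.Iic 0) = 0) (hlevy : Integrable (fun x => x / (1 + x)) ν)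
include hsupp hlevy

lemma integrable_one_sub_exp_neg_mul {s : ℝ} (hs : 0 ≤ s) :
    Integrable (fun x => 1 - exp (-s * x)) ν := by
  refine (hlevy.const_mul (2 * (1 + s))).mono' (by fun_prop) ?_
  filter_upwards [ae_pos_of_measure_Iic_eq_zero hsupp] with x hx
  have : exp (-s * x) ≤ 1 := exp_le_one_iff.2 (by nlinarith)
  rw [Real.norm_eq_abs, abs_of_nonneg (by linarith)]
  exact one_sub_exp_neg_mul_le hs hx.le

lemma integral_one_sub_exp_neg_mul_le {s : ℝ} (hs : 0 ≤ s) :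
    ∫ x, (1 - exp (-s * x)) ∂ν ≤ 2 * (1 + s) * ∫ x, x / (1 + x) ∂ν := by
  rw [← integral_const_mul]
  refine integral_mono_ae (integrable_one_sub_exp_neg_mul hsupp hlevy hs)
    (hlevy.const_mul _) ?_
  filter_upwards [ae_pos_of_measure_Iic_eq_zero hsupp] with x hx
  exact one_sub_exp_neg_mul_le hs hx.le

lemma monotoneOn_integral_one_sub_exp_neg_mul :
    MonotoneOn (fun s => ∫ x, (1 - exp (-s * x)) ∂ν) (Set.Ici 0) := by
  intro u hu v hv huv
  refine integral_mono_ae (integrable_one_sub_exp_neg_mul hsupp hlevy hu)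
    (integrable_one_sub_exp_neg_mul hsupp hlevy hv) ?_
  filter_upwards [ae_pos_of_measure_Iic_eq_zero hsupp] with x hx
  have : exp (-v * x) ≤ exp (-u * x) := exp_le_exp.2 (by nlinarith)
  linarith

end LevyMeasure

theorem carleman_condition_for_bernstein_products
    (f : ℝ → ℝ) (a b α β : ℝ) (ν : Measure ℝ)
    (ha : 0 ≤ a) (hb : 0 ≤ b) (hα : 0 ≤ α) (hβ : 0 < β)
    (hsupp : ν (Set.Iic 0) = 0)
    (hlevy : Integrable (fun x => x / (1 + x)) ν)
    (hrep : ∀ s : ℝ, 0 ≤ s →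
      f s = a + b * s + ∫ x, (1 - Real.exp (-s * x)) ∂ν)
    (hfα : 0 < f α)
    (s : ℕ → ℝ)
    (hs : ∀ n : ℕ, s n = ∏ k ∈ Finset.range n, f (α + k * β))
    (c : ℝ) (hc0 : 0 < c) (hc2 : c ≤ 2) :
    ¬ Summable (fun n : ℕ => (s n) ^ (-(c / (2 * (n : ℝ))))) := by
  set I := ∫ x, x / (1 + x) ∂ν
  have hI : 0 ≤ I := integral_nonneg_of_ae <| by
    filter_upwards [ae_pos_of_measure_Iic_eq_zero hsupp] with x hx
    positivity
  have hnode : ∀ k : ℕ, α ≤ α + k * β := fun k => le_add_of_nonneg_right (by positivity)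
  have hmono : MonotoneOn f (Set.Ici 0) := fun u hu v hv huv => by
    rw [hrep u hu, hrep v hv]
    exact add_le_add (by gcongr) (monotoneOn_integral_one_sub_exp_neg_mul hsupp hlevy hu hv huv)
  have hpos : ∀ k : ℕ, 0 < f (α + k * β) := fun k =>
    hfα.trans_le (hmono hα (hα.trans (hnode k)) (hnode k))
  have hlin : ∀ k : ℕ,
      f (α + k * β) ≤ (a + b * (α + β) + 2 * (1 + α + β) * I) * (k + 1) := fun k => by
    have hk := k.cast_nonneg (α := ℝ)
    have := integral_one_sub_exp_neg_mul_le hsupp hlevy (hα.trans (hnode k))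
    rw [hrep _ (hα.trans (hnode k))]
    nlinarith [mul_nonneg ha hk, mul_nonneg (mul_nonneg hb hα) hk, mul_nonneg hb hβ.le,
      mul_nonneg hI hk, mul_nonneg (mul_nonneg hα hI) hk, mul_nonneg hβ.le hI]
  simp only [hs]
  exact not_summable_prod_rpow_of_le_mul_succ hpos hlin hc0.le hc2
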